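/- arXiv:1106.1307 — 3 statements merged into one kernel-verified Lean document; each statement's English description precedes it below -/
import Mathlib

section
/- (Liouville–Ostrogradski formula) Let (P_n) be orthonormal matrix orthogonal polynomials for a non-trivial weight W, (Q_n) the associated matrix polynomials of the second kind, and A_n = κ_{n-1}·κ_n^{-1}. Then for every n ≥ 1 and every z ∈ ℂ, Q_n(z)·P_{n-1}*(z) − P_n(z)·Q_{n-1}*(z) = A_n^{-1}. -/
open MeasureTheory Matrix Complex Finset
open scoped ComplexOrder

/-- Entrywise integral of a matrix-valued function over an interval `(a, b)`. -/
noncomputable def mint {N : ℕ} (a b : ℝ) (F : ℝ → Matrix (Fin N) (Fin N) ℂ) :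
    Matrix (Fin N) (Fin N) ℂ :=
  Matrix.of fun i j => ∫ x in a..b, F x i j

namespace LOhelp

lemma ae_ne_real (c : ℝ) : ∀ᵐ x : ℝ ∂volume, x ≠ c := by
  rw [MeasureTheory.ae_iff]
  refine measure_mono_null (fun t ht => ?_) (measure_singleton c)
  simpa using ht

lemma ae_coe_ne (w : ℂ) : ∀ᵐ t : ℝ ∂volume, (t : ℂ) ≠ w := by
  rw [MeasureTheory.ae_iff]
  refine measure_mono_null (fun t ht => ?_) (measure_singleton w.re)
  simp only [Set.mem_setOf_eq, not_not] at ht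
  simp [Set.mem_singleton_iff, ← ht]

variable {N : ℕ} {a b : ℝ} {W : ℝ → Matrix (Fin N) (Fin N) ℂ}

/-- entrywise interval integrability -/
def MII (a b : ℝ) (F : ℝ → Matrix (Fin N) (Fin N) ℂ) : Prop :=
  ∀ p q, IntervalIntegrable (fun x => F x p q) volume a b

lemma II0 (hab : a < b) (hWcont : ContinuousOn W (Set.Ioo a b))
    (hWmom : ∀ (n : ℕ) (i j : Fin N),
      IntegrableOn (fun x : ℝ => |x| ^ n * ‖W x i j‖) (Set.Ioo a b))
    (k : ℕ) (r s : Fin N) :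
    IntervalIntegrable (fun x : ℝ => (x : ℂ) ^ k * W x r s) volume a b := by
  rw [intervalIntegrable_iff_integrableOn_Ioo_of_le hab.le]
  have hcont : ContinuousOn (fun x : ℝ => (x : ℂ) ^ k * W x r s) (Set.Ioo a b) := by
    refine ContinuousOn.mul ?_ ?_
    · exact (Complex.continuous_ofReal.pow k).continuousOn
    · exact ((continuous_apply s).comp (continuous_apply r)).comp_continuousOn hWcont
  refine Integrable.mono' (hWmom k r s) (hcont.aestronglyMeasurable measurableSet_Ioo) ?_
  filter_upwards with x
  simp [norm_mul, norm_pow, Complex.norm_real, Real.norm_eq_abs]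

section W
variable (hab : a < b) (hWcont : ContinuousOn W (Set.Ioo a b))
    (hWmom : ∀ (n : ℕ) (i j : Fin N),
      IntegrableOn (fun x : ℝ => |x| ^ n * ‖W x i j‖) (Set.Ioo a b))
include hab hWcont hWmom

omit hab hWcont hWmom in
lemma entry_eq (k : ℕ) (A C : Matrix (Fin N) (Fin N) ℂ) (p q : Fin N) :
    (fun x : ℝ => ((x : ℂ) ^ k • (A * W x * C)) p q)
      = ∑ s : Fin N, ∑ r : Fin N,
          (fun x : ℝ => A p r * ((x : ℂ) ^ k * W x r s) * C s q) := by
  funext x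
  simp only [Finset.sum_apply, Matrix.smul_apply, smul_eq_mul, Matrix.mul_apply,
    Finset.sum_mul, Finset.mul_sum]
  exact Finset.sum_congr rfl fun s _ => Finset.sum_congr rfl fun r _ => by ring

omit hab hWcont hWmom in
lemma entry_eq' (k : ℕ) (A C : Matrix (Fin N) (Fin N) ℂ) (p q : Fin N) :
    (fun x : ℝ => ((x : ℂ) ^ k • (A * W x * C)) p q)
      = fun x : ℝ => ∑ s : Fin N, ∑ r : Fin N,
          A p r * ((x : ℂ) ^ k * W x r s) * C s q := by
  rw [entry_eq (W := W) k A C p q]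
  funext x
  simp [Finset.sum_apply]

lemma MII_single (k : ℕ) (A C : Matrix (Fin N) (Fin N) ℂ) :
    MII a b (fun x => (x : ℂ) ^ k • (A * W x * C)) := by
  intro p q
  rw [show (fun x : ℝ => ((x : ℂ) ^ k • (A * W x * C)) p q) = _ from
    entry_eq (W := W) k A C p q]
  exact IntervalIntegrable.sum _ fun s _ => IntervalIntegrable.sum _ fun r _ =>
    ((II0 hab hWcont hWmom k r s).const_mul _).mul_const _

lemma mint_single (k : ℕ) (A C : Matrix (Fin N) (Fin N) ℂ) :
    mint a b (fun x => (x : ℂ) ^ k • (A * W x * C))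
      = A * (mint a b fun x => (x : ℂ) ^ k • W x) * C := by
  ext p q
  show (∫ x in a..b, ((x : ℂ) ^ k • (A * W x * C)) p q) = _
  have hint : ∀ s r : Fin N,
      IntervalIntegrable (fun x : ℝ => A p r * ((x : ℂ) ^ k * W x r s) * C s q) volume a b :=
    fun s r => ((II0 hab hWcont hWmom k r s).const_mul _).mul_const _
  have he := entry_eq' (W := W) k A C p q
  rw [he, intervalIntegral.integral_finset_sum (fun s _ => by
    rw [← Finset.sum_fn]; exact IntervalIntegrable.sum _ fun r _ => hint s r)]
  have h2 : ∀ s : Fin N,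
      (∫ x in a..b, ∑ r : Fin N, A p r * ((x : ℂ) ^ k * W x r s) * C s q)
        = ∑ r : Fin N, A p r * (∫ x in a..b, (x : ℂ) ^ k * W x r s) * C s q := by
    intro s
    rw [intervalIntegral.integral_finset_sum (fun r _ => hint s r)]
    exact Finset.sum_congr rfl fun r _ => by
      rw [intervalIntegral.integral_mul_const, intervalIntegral.integral_const_mul]
  simp only [h2]
  simp only [Matrix.mul_apply, Finset.sum_mul, mint, Matrix.of_apply, Matrix.smul_apply,
    smul_eq_mul]

lemma mint_Wsum {ι : Type*} (s : Finset ι) (k : ι → ℕ) (A C : ι → Matrix (Fin N) (Fin N) ℂ) :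
    mint a b (fun x => ∑ i ∈ s, (x : ℂ) ^ (k i) • (A i * W x * C i))
      = ∑ i ∈ s, A i * (mint a b fun x => (x : ℂ) ^ (k i) • W x) * C i := by
  have := fun (i : ι) => mint_single (W := W) hab hWcont hWmom (k i) (A i) (C i)
  calc mint a b (fun x => ∑ i ∈ s, (x : ℂ) ^ (k i) • (A i * W x * C i))
      = ∑ i ∈ s, mint a b (fun x => (x : ℂ) ^ (k i) • (A i * W x * C i)) := ?_
    _ = _ := Finset.sum_congr rfl fun i _ => this i
  ext p q
  show (∫ x in a..b, (∑ i ∈ s, (x : ℂ) ^ (k i) • (A i * W x * C i)) p q) = _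
  simp only [Matrix.sum_apply]
  rw [intervalIntegral.integral_finset_sum
    (fun i _ => MII_single (W := W) hab hWcont hWmom (k i) (A i) (C i) p q)]
  rfl


lemma mint_Wsum2 (s : Finset ℕ) (r : ℕ → Finset ℕ) (k : ℕ → ℕ → ℕ)
    (A C : ℕ → ℕ → Matrix (Fin N) (Fin N) ℂ) :
    mint a b (fun x => ∑ j ∈ s, ∑ l ∈ r j, (x : ℂ) ^ (k j l) • (A j l * W x * C j l))
      = ∑ j ∈ s, ∑ l ∈ r j,
          A j l * (mint a b fun x => (x : ℂ) ^ (k j l) • W x) * C j l := by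
  calc mint a b (fun x => ∑ j ∈ s, ∑ l ∈ r j, (x : ℂ) ^ (k j l) • (A j l * W x * C j l))
      = mint a b (fun x => ∑ p ∈ s.sigma r,
          (x : ℂ) ^ (k p.1 p.2) • (A p.1 p.2 * W x * C p.1 p.2)) := by
        refine congrArg _ (funext fun x => ?_)
        rw [Finset.sum_sigma]
    _ = ∑ p ∈ s.sigma r,
          A p.1 p.2 * (mint a b fun x => (x : ℂ) ^ (k p.1 p.2) • W x) * C p.1 p.2 :=
        mint_Wsum hab hWcont hWmom _ _ _ _
    _ = _ := by rw [Finset.sum_sigma]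

end W

lemma mint_congr_ae {F G : ℝ → Matrix (Fin N) (Fin N) ℂ}
    (h : ∀ᵐ x ∂(volume : Measure ℝ), F x = G x) :
    mint a b F = mint a b G := by
  ext i j
  exact intervalIntegral.integral_congr_ae (h.mono fun x hx _ => by rw [hx])


lemma mint_congr_ae_mem {F G : ℝ → Matrix (Fin N) (Fin N) ℂ}
    (h : ∀ᵐ x ∂(volume : Measure ℝ), x ∈ Set.uIoc a b → F x = G x) :
    mint a b F = mint a b G := by
  ext i j
  exact intervalIntegral.integral_congr_ae (h.mono fun x hx hmem => by rw [hx hmem])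

lemma mint_conjT (hab : a ≤ b) (F : ℝ → Matrix (Fin N) (Fin N) ℂ) :
    mint a b (fun x => (F x)ᴴ) = (mint a b F)ᴴ := by
  ext p q
  show (∫ x in a..b, (F x)ᴴ p q) = (starRingEnd ℂ) (∫ x in a..b, F x q p)
  simp only [Matrix.conjTranspose_apply, ← starRingEnd_apply]
  rw [intervalIntegral.integral_of_le hab, intervalIntegral.integral_of_le hab, integral_conj]

lemma dd (c : ℕ → Matrix (Fin N) (Fin N) ℂ) (ν : ℕ) (t z : ℂ) :
    (∑ j ∈ Finset.range ν, t ^ j • c j) - (∑ j ∈ Finset.range ν, z ^ j • c j)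
      = (t - z) • ∑ j ∈ Finset.range ν, ∑ k ∈ Finset.range j, (t ^ k * z ^ (j - 1 - k)) • c j := by
  rw [← Finset.sum_sub_distrib, Finset.smul_sum]
  refine Finset.sum_congr rfl fun j _ => ?_
  rw [← sub_smul, ← geom_sum₂_mul t z j, Finset.smul_sum]
  simp only [smul_smul]
  rw [← Finset.sum_smul, ← Finset.mul_sum, mul_comm (t - z) _]


lemma finale {N : ℕ} (m : ℕ) (z : ℂ) (M A B : ℕ → Matrix (Fin N) (Fin N) ℂ)
    (K : Matrix (Fin N) (Fin N) ℂ)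
    (hS : ∀ k, k < m + 1 → ∑ j ∈ Finset.range (m + 2), A j * M (j + k) = 0)
    (hG : ∀ k, k < m → ∑ l ∈ Finset.range (m + 1), M (l + k) * B l = 0)
    (hGm : ∑ l ∈ Finset.range (m + 1), M (l + m) * B l = K) :
    (∑ j ∈ Finset.range (m + 2), ∑ k ∈ Finset.range j, z ^ (j - 1 - k) • (A j * M k))
        * (∑ l ∈ Finset.range (m + 1), z ^ l • B l)
      - (∑ j ∈ Finset.range (m + 2), z ^ j • A j)
        * (∑ l ∈ Finset.range (m + 1), ∑ k ∈ Finset.range l, z ^ (l - 1 - k) • (M k * B l))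
      = A (m + 1) * K := by
  have e1 : (∑ j ∈ Finset.range (m + 2), ∑ k ∈ Finset.range j, z ^ (j - 1 - k) • (A j * M k))
        * (∑ l ∈ Finset.range (m + 1), z ^ l • B l)
      = ∑ j ∈ Finset.range (m + 2), ∑ l ∈ Finset.range (m + 1), ∑ k ∈ Finset.range j,
          z ^ (j + l - 1 - k) • (A j * M k * B l) := by
    rw [Finset.sum_mul]
    refine Finset.sum_congr rfl fun j _ => ?_
    rw [Finset.sum_mul_sum, Finset.sum_comm]
    refine Finset.sum_congr rfl fun l _ => Finset.sum_congr rfl fun k hk => ?_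
    rw [smul_mul_smul_comm, ← pow_add, mul_assoc,
      show j - 1 - k + l = j + l - 1 - k by have := Finset.mem_range.1 hk; omega]
  have e2 : (∑ j ∈ Finset.range (m + 2), z ^ j • A j)
        * (∑ l ∈ Finset.range (m + 1), ∑ k ∈ Finset.range l, z ^ (l - 1 - k) • (M k * B l))
      = ∑ j ∈ Finset.range (m + 2), ∑ l ∈ Finset.range (m + 1), ∑ k ∈ Finset.range l,
          z ^ (j + l - 1 - k) • (A j * M k * B l) := by
    rw [Finset.sum_mul_sum]
    refine Finset.sum_congr rfl fun j _ => Finset.sum_congr rfl fun l _ => ?_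
    rw [Finset.mul_sum]
    refine Finset.sum_congr rfl fun k hk => ?_
    simp only [smul_mul_assoc, mul_smul_comm, smul_smul]
    rw [← pow_add, ← mul_assoc,
      show l - 1 - k + j = j + l - 1 - k by have := Finset.mem_range.1 hk; omega]
  rw [e1, e2, ← Finset.sum_sub_distrib]
  have e3 : ∀ j ∈ Finset.range (m + 2),
      (∑ l ∈ Finset.range (m + 1), ∑ k ∈ Finset.range j, z ^ (j + l - 1 - k) • (A j * M k * B l))
        - (∑ l ∈ Finset.range (m + 1), ∑ k ∈ Finset.range l, z ^ (j + l - 1 - k) • (A j * M k * B l))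
      = ∑ l ∈ Finset.range (m + 1),
          ((∑ k ∈ Finset.range j, z ^ (j - 1 - k) • (A j * M (l + k) * B l))
            - ∑ k ∈ Finset.range l, z ^ (l - 1 - k) • (A j * M (j + k) * B l)) := by
    intro j _
    rw [← Finset.sum_sub_distrib]
    refine Finset.sum_congr rfl fun l _ => ?_
    set f : ℕ → Matrix (Fin N) (Fin N) ℂ := fun k => z ^ (j + l - 1 - k) • (A j * M k * B l)
      with hf
    have hsplit1 : ∑ k ∈ Finset.range (j + l), f k
        = (∑ k ∈ Finset.range j, f k) + ∑ k ∈ Finset.range l, f (j + k) :=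
      Finset.sum_range_add f j l
    have hsplit2 : ∑ k ∈ Finset.range (j + l), f k
        = (∑ k ∈ Finset.range l, f k) + ∑ k ∈ Finset.range j, f (l + k) := by
      rw [show j + l = l + j from Nat.add_comm j l]; exact Finset.sum_range_add f l j
    have key : (∑ k ∈ Finset.range j, f k) - ∑ k ∈ Finset.range l, f k
        = (∑ k ∈ Finset.range j, f (l + k)) - ∑ k ∈ Finset.range l, f (j + k) := by
      rw [sub_eq_sub_iff_add_eq_add, hsplit1.symm.trans hsplit2, add_comm]
    rw [key]
    congr 1
    · refine Finset.sum_congr rfl fun k hk => ?_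
      simp only [hf]
      rw [show j + l - 1 - (l + k) = j - 1 - k by have := Finset.mem_range.1 hk; omega]
    · refine Finset.sum_congr rfl fun k hk => ?_
      simp only [hf]
      rw [show j + l - 1 - (j + k) = l - 1 - k by have := Finset.mem_range.1 hk; omega]
  rw [Finset.sum_congr rfl e3]
  simp only [Finset.sum_sub_distrib]
  have e4 : ∑ j ∈ Finset.range (m + 2), ∑ l ∈ Finset.range (m + 1),
      ∑ k ∈ Finset.range l, z ^ (l - 1 - k) • (A j * M (j + k) * B l) = 0 := by
    rw [Finset.sum_comm]
    refine Finset.sum_eq_zero fun l hl => ?_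
    rw [Finset.sum_comm]
    refine Finset.sum_eq_zero fun k hk => ?_
    have hkl : k < l := Finset.mem_range.1 hk
    have hlm : l < m + 1 := Finset.mem_range.1 hl
    have : ∑ j ∈ Finset.range (m + 2), z ^ (l - 1 - k) • (A j * M (j + k) * B l)
        = z ^ (l - 1 - k) • ((∑ j ∈ Finset.range (m + 2), A j * M (j + k)) * B l) := by
      rw [Finset.sum_mul, Finset.smul_sum]
    rw [this, hS k (by omega)]
    simp
  rw [e4, sub_zero]
  have e5 : ∀ j ∈ Finset.range (m + 2),
      ∑ l ∈ Finset.range (m + 1), ∑ k ∈ Finset.range j,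
        z ^ (j - 1 - k) • (A j * M (l + k) * B l)
      = if j = m + 1 then A (m + 1) * K else 0 := by
    intro j hj
    rw [Finset.sum_comm]
    have inner : ∀ k, k ∈ Finset.range j →
        ∑ l ∈ Finset.range (m + 1), z ^ (j - 1 - k) • (A j * M (l + k) * B l)
        = z ^ (j - 1 - k) • (A j * ∑ l ∈ Finset.range (m + 1), M (l + k) * B l) := by
      intro k _
      rw [Finset.mul_sum, Finset.smul_sum]
      exact Finset.sum_congr rfl fun l _ => by rw [mul_assoc]
    rw [Finset.sum_congr rfl inner]
    by_cases hjm : j = m + 1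
    · subst hjm
      rw [if_pos rfl]
      rw [Finset.sum_eq_single_of_mem m (Finset.self_mem_range_succ m)]
      · rw [hGm, show m + 1 - 1 - m = 0 by omega, pow_zero, one_smul]
      · intro k hk hkm
        have : k < m := by have := Finset.mem_range.1 hk; omega
        rw [hG k this, Matrix.mul_zero, smul_zero]
    · rw [if_neg hjm]
      have hjm' : j ≤ m := by have := Finset.mem_range.1 hj; omega
      refine Finset.sum_eq_zero fun k hk => ?_
      have : k < m := by have := Finset.mem_range.1 hk; omega
      rw [hG k this, Matrix.mul_zero, smul_zero]
  rw [Finset.sum_congr rfl e5, Finset.sum_ite_eq' (Finset.range (m + 2)) (m + 1)]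
  rw [if_pos (Finset.self_mem_range_succ (m + 1))]


end LOhelp

theorem stmt1
    (N : ℕ) (hN : 1 ≤ N) (a b : ℝ) (hab : a < b)
    (W : ℝ → Matrix (Fin N) (Fin N) ℂ)
    (hWcont : ContinuousOn W (Set.Ioo a b))
    (hWpos : ∀ x ∈ Set.Ioo a b, (W x).PosDef)
    (hWmom : ∀ (n : ℕ) (i j : Fin N),
      IntegrableOn (fun x : ℝ => |x| ^ n * ‖W x i j‖) (Set.Ioo a b))
    (hWnt : ∀ (d : ℕ) (c : Fin (d + 1) → Matrix (Fin N) (Fin N) ℂ), (∃ k, c k ≠ 0) →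
      IsUnit (mint a b (fun x =>
        (∑ k : Fin (d + 1), ((x : ℂ) ^ (k : ℕ)) • c k) * W x * (∑ k : Fin (d + 1), ((x : ℂ) ^ (k : ℕ)) • c k)ᴴ)))
    (aC : ℕ → ℤ → Matrix (Fin N) (Fin N) ℂ)
    (haDiag : ∀ n : ℕ, aC n n = 1)
    (haHigh : ∀ (n : ℕ) (j : ℤ), (n : ℤ) < j → aC n j = 0)
    (haLow : ∀ (n : ℕ) (j : ℤ), j < 0 → aC n j = 0)
    (P : ℕ → ℂ → Matrix (Fin N) (Fin N) ℂ)
    (hP : ∀ (n : ℕ) (z : ℂ), P n z = ∑ j ∈ Finset.range (n + 1), z ^ j • aC n j)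
    (horth : ∀ n j : ℕ, j < n →
      mint a b (fun x => ((x : ℂ) ^ j) • (P n (x : ℂ) * W x)) = 0)
    (γ : ℕ → Matrix (Fin N) (Fin N) ℂ)
    (hγ : ∀ n : ℕ, γ n * mint a b (fun x => P n (x : ℂ) * W x * (P n (x : ℂ))ᴴ) = 1)
    (κ : ℕ → Matrix (Fin N) (Fin N) ℂ)
    (hκu : ∀ n : ℕ, IsUnit (κ n))
    (hκ : ∀ n : ℕ, (κ n)ᴴ * κ n = γ n)
    (Pn : ℕ → ℂ → Matrix (Fin N) (Fin N) ℂ)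
    (hPn : ∀ (n : ℕ) (z : ℂ), Pn n z = κ n * P n z)
    (Q : ℕ → ℂ → Matrix (Fin N) (Fin N) ℂ)
    (hQ : ∀ (n : ℕ) (z : ℂ),
      Q n z = mint a b (fun t => ((t : ℂ) - z)⁻¹ • ((Pn n (t : ℂ) - Pn n z) * W t)))
 :
    ∀ n : ℕ, 1 ≤ n → ∀ z : ℂ,
      Q n z * (Pn (n - 1) (starRingEnd ℂ z))ᴴ - Pn n z * (Q (n - 1) (starRingEnd ℂ z))ᴴ =
        (κ (n - 1) * (κ n)⁻¹)⁻¹ := by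
  intro n hn z
  obtain ⟨m, rfl⟩ : ∃ m, n = m + 1 := ⟨n - 1, (Nat.succ_pred_eq_of_pos hn).symm⟩
  simp only [Nat.add_sub_cancel]
  have hdet : ∀ ν : ℕ, IsUnit (κ ν).det := fun ν => (Matrix.isUnit_iff_isUnit_det _).1 (hκu ν)
  -- orthonormal polynomials expanded
  have hPnt : ∀ (ν : ℕ) (w : ℂ), Pn ν w = ∑ j ∈ Finset.range (ν + 1), w ^ j • (κ ν * aC ν j) := by
    intro ν w
    rw [hPn, hP, Finset.mul_sum]
    exact Finset.sum_congr rfl fun j _ => mul_smul_comm _ _ _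
  -- W is a.e. Hermitian on the interval
  have aeW : ∀ᵐ x : ℝ ∂volume, x ∈ Set.uIoc a b → (W x)ᴴ = W x := by
    filter_upwards [LOhelp.ae_ne_real b] with x hxb hmem
    rw [Set.uIoc_of_le hab.le] at hmem
    exact (hWpos x ⟨hmem.1, lt_of_le_of_ne hmem.2 hxb⟩).1
  -- moments are Hermitian
  have MomH : ∀ k : ℕ, (mint a b fun x => (x : ℂ) ^ k • W x)ᴴ
      = mint a b fun x => (x : ℂ) ^ k • W x := by
    intro k
    rw [← LOhelp.mint_conjT hab.le]
    apply LOhelp.mint_congr_ae_mem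
    filter_upwards [aeW] with x hx hmem
    rw [Matrix.conjTranspose_smul, hx hmem]
    simp [star_pow, Complex.star_def, Complex.conj_ofReal]
  -- explicit formula for the second kind polynomials
  have hQC : ∀ (ν : ℕ) (w : ℂ), Q ν w
      = ∑ j ∈ Finset.range (ν + 1), ∑ k ∈ Finset.range j,
          w ^ (j - 1 - k) • (κ ν * aC ν j * mint a b fun x => (x : ℂ) ^ k • W x) := by
    intro ν w
    rw [hQ]
    have hfun : ∀ᵐ t : ℝ ∂volume, ((t : ℂ) - w)⁻¹ • ((Pn ν (t : ℂ) - Pn ν w) * W t)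
        = ∑ j ∈ Finset.range (ν + 1), ∑ k ∈ Finset.range j,
            (t : ℂ) ^ k • ((w ^ (j - 1 - k) • (κ ν * aC ν j)) * W t * 1) := by
      filter_upwards [LOhelp.ae_coe_ne w] with t ht
      rw [hPnt ν (t : ℂ), hPnt ν w, LOhelp.dd (fun j => κ ν * aC ν j) (ν + 1) (t : ℂ) w,
        smul_mul_assoc, smul_smul, inv_mul_cancel₀ (sub_ne_zero.mpr ht), one_smul,
        Finset.sum_mul]
      refine Finset.sum_congr rfl fun j _ => ?_
      rw [Finset.sum_mul]
      refine Finset.sum_congr rfl fun k _ => ?_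
      simp only [Matrix.mul_one, smul_mul_assoc, smul_smul]
    rw [LOhelp.mint_congr_ae hfun, LOhelp.mint_Wsum2 hab hWcont hWmom _ _ _ _ _]
    refine Finset.sum_congr rfl fun j _ => Finset.sum_congr rfl fun k _ => ?_
    rw [Matrix.mul_one, smul_mul_assoc]
  -- orthogonality in terms of moments
  have O1 : ∀ ν r : ℕ, r < ν →
      ∑ j ∈ Finset.range (ν + 1), aC ν j * (mint a b fun x => (x : ℂ) ^ (j + r) • W x) = 0 := by
    intro ν r hr
    have h0 := horth ν r hr
    have hfun : (fun x : ℝ => ((x : ℂ) ^ r) • (P ν (x : ℂ) * W x))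
        = fun x : ℝ => ∑ j ∈ Finset.range (ν + 1), (x : ℂ) ^ (j + r) • (aC ν j * W x * 1) := by
      funext x
      rw [hP, Finset.sum_mul, Finset.smul_sum]
      refine Finset.sum_congr rfl fun j _ => ?_
      rw [Matrix.mul_one, smul_mul_assoc, smul_smul, ← pow_add, Nat.add_comm r j]
    rw [hfun, LOhelp.mint_Wsum hab hWcont hWmom _ _ _ _] at h0
    simpa [Matrix.mul_one] using h0
  -- the S relation
  have hS : ∀ k, k < m + 1 → ∑ j ∈ Finset.range (m + 2),
      (κ (m + 1) * aC (m + 1) j) * (mint a b fun x => (x : ℂ) ^ (j + k) • W x) = 0 := by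
    intro k hk
    have h1 : ∑ j ∈ Finset.range (m + 2),
        (κ (m + 1) * aC (m + 1) j) * (mint a b fun x => (x : ℂ) ^ (j + k) • W x)
      = κ (m + 1) * ∑ j ∈ Finset.range (m + 2),
          aC (m + 1) j * (mint a b fun x => (x : ℂ) ^ (j + k) • W x) := by
      rw [Finset.mul_sum]
      exact Finset.sum_congr rfl fun j _ => mul_assoc _ _ _
    rw [h1]
    have h2 : ∑ j ∈ Finset.range (m + 2),
        aC (m + 1) j * (mint a b fun x => (x : ℂ) ^ (j + k) • W x) = 0 := O1 (m + 1) k hk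
    rw [h2, mul_zero]
  -- transpose trick for the G relation
  have hG0 : ∀ k : ℕ, ∑ l ∈ Finset.range (m + 1),
      (mint a b fun x => (x : ℂ) ^ (l + k) • W x) * (κ m * aC m l)ᴴ
    = (∑ l ∈ Finset.range (m + 1),
        aC m l * (mint a b fun x => (x : ℂ) ^ (l + k) • W x))ᴴ * (κ m)ᴴ := by
    intro k
    rw [Matrix.conjTranspose_sum, Finset.sum_mul]
    refine Finset.sum_congr rfl fun l _ => ?_
    rw [Matrix.conjTranspose_mul (aC m l), MomH, Matrix.conjTranspose_mul (κ m), ← mul_assoc]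
  have hG : ∀ k, k < m → ∑ l ∈ Finset.range (m + 1),
      (mint a b fun x => (x : ℂ) ^ (l + k) • W x) * (κ m * aC m l)ᴴ = 0 := by
    intro k hk
    rw [hG0 k, O1 m k hk, Matrix.conjTranspose_zero, Matrix.zero_mul]
  -- the Γ computation from hγ
  have hΓ : ∑ l ∈ Finset.range (m + 1),
      aC m l * (mint a b fun x => (x : ℂ) ^ (l + m) • W x) = (γ m)⁻¹ := by
    have hfun : (fun x : ℝ => P m (x : ℂ) * W x * (P m (x : ℂ))ᴴ)
        = fun x : ℝ => ∑ j ∈ Finset.range (m + 1), ∑ l ∈ Finset.range (m + 1),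
            (x : ℂ) ^ (j + l) • (aC m j * W x * (aC m l)ᴴ) := by
      funext x
      rw [hP]
      rw [Matrix.conjTranspose_sum]
      simp only [Matrix.conjTranspose_smul, star_pow, Complex.star_def, Complex.conj_ofReal,
        Finset.sum_mul, Finset.mul_sum, smul_mul_assoc, mul_smul_comm, smul_smul, pow_add]
      simp only [Finset.smul_sum, smul_smul]
      rw [Finset.sum_comm]
      exact Finset.sum_congr rfl fun j _ => Finset.sum_congr rfl fun l _ => by
        rw [mul_comm ((x : ℂ) ^ l) ((x : ℂ) ^ j)]
    have hmint : mint a b (fun x => P m (x : ℂ) * W x * (P m (x : ℂ))ᴴ)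
        = ∑ j ∈ Finset.range (m + 1), ∑ l ∈ Finset.range (m + 1),
            aC m j * (mint a b fun x => (x : ℂ) ^ (j + l) • W x) * (aC m l)ᴴ := by
      rw [congrArg (mint a b) hfun, LOhelp.mint_Wsum2 hab hWcont hWmom _ _ _ _ _]
    have hgroup : mint a b (fun x => P m (x : ℂ) * W x * (P m (x : ℂ))ᴴ)
        = ∑ l ∈ Finset.range (m + 1),
            (∑ j ∈ Finset.range (m + 1),
              aC m j * (mint a b fun x => (x : ℂ) ^ (j + l) • W x)) * (aC m l)ᴴ := by
      rw [hmint, Finset.sum_comm]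
      exact Finset.sum_congr rfl fun l _ => (Finset.sum_mul _ _ _).symm
    have hkill : ∀ l ∈ Finset.range (m + 1),
        (∑ j ∈ Finset.range (m + 1),
            aC m j * (mint a b fun x => (x : ℂ) ^ (j + l) • W x)) * (aC m l)ᴴ
        = if l = m then ∑ j ∈ Finset.range (m + 1),
            aC m j * (mint a b fun x => (x : ℂ) ^ (j + m) • W x) else 0 := by
      intro l hl
      by_cases hlm : l = m
      · rw [hlm, if_pos rfl, haDiag m, Matrix.conjTranspose_one, mul_one]
      · have hlm' : l < m := by have := Finset.mem_range.1 hl; omega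
        rw [if_neg hlm, O1 m l hlm', Matrix.zero_mul]
    have hval : mint a b (fun x => P m (x : ℂ) * W x * (P m (x : ℂ))ᴴ)
        = ∑ j ∈ Finset.range (m + 1),
            aC m j * (mint a b fun x => (x : ℂ) ^ (j + m) • W x) := by
      rw [hgroup, Finset.sum_congr rfl hkill,
        Finset.sum_ite_eq' (Finset.range (m + 1)) m, if_pos (Finset.self_mem_range_succ m)]
    have hγm := hγ m
    rw [hval] at hγm
    exact (Matrix.inv_eq_right_inv hγm).symm
  -- the G value at k = m
  have hGm : ∑ l ∈ Finset.range (m + 1),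
      (mint a b fun x => (x : ℂ) ^ (l + m) • W x) * (κ m * aC m l)ᴴ = (κ m)⁻¹ := by
    rw [hG0 m, hΓ, Matrix.conjTranspose_nonsing_inv]
    have hγH : (γ m)ᴴ = γ m := by
      rw [← hκ m, Matrix.conjTranspose_mul, Matrix.conjTranspose_conjTranspose]
    rw [hγH, ← hκ m, Matrix.mul_inv_rev, mul_assoc,
      Matrix.nonsing_inv_mul _ (by rw [Matrix.det_conjTranspose]; exact isUnit_star.2 (hdet m)),
      mul_one]
  -- conjugate-transposed objects
  have hPstZ : (Pn m (starRingEnd ℂ z))ᴴ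
      = ∑ l ∈ Finset.range (m + 1), z ^ l • (κ m * aC m l)ᴴ := by
    rw [hPnt m (starRingEnd ℂ z), Matrix.conjTranspose_sum]
    refine Finset.sum_congr rfl fun l _ => ?_
    rw [Matrix.conjTranspose_smul]
    congr 1
    simp [star_pow, Complex.star_def]
  have hYQ : (Q m (starRingEnd ℂ z))ᴴ
      = ∑ l ∈ Finset.range (m + 1), ∑ k ∈ Finset.range l,
          z ^ (l - 1 - k) • ((mint a b fun x => (x : ℂ) ^ k • W x) * (κ m * aC m l)ᴴ) := by
    rw [hQC m (starRingEnd ℂ z), Matrix.conjTranspose_sum]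
    refine Finset.sum_congr rfl fun l _ => ?_
    rw [Matrix.conjTranspose_sum]
    refine Finset.sum_congr rfl fun k _ => ?_
    rw [Matrix.conjTranspose_smul, Matrix.conjTranspose_mul (κ m * aC m l), MomH]
    congr 1
    simp [star_pow, Complex.star_def]
  -- final assembly
  rw [hQC (m + 1) z, hPstZ, hPnt (m + 1) z, hYQ]
  have hRHS : (κ m * (κ (m + 1))⁻¹)⁻¹
      = (κ (m + 1) * aC (m + 1) ((m + 1 : ℕ))) * (κ m)⁻¹ := by
    rw [haDiag (m + 1), mul_one, Matrix.mul_inv_rev,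
      Matrix.nonsing_inv_nonsing_inv _ (hdet (m + 1))]
  rw [hRHS]
  exact LOhelp.finale m z (fun k => mint a b fun x => (x : ℂ) ^ k • W x)
    (fun j => κ (m + 1) * aC (m + 1) j) (fun l => (κ m * aC m l)ᴴ) ((κ m)⁻¹) hS hG hGm
end

section
/- (Hermitian property) Let (P_n) be orthonormal matrix orthogonal polynomials for a non-trivial weight W and (Q_n) the associated matrix polynomials of the second kind. Then for every n ≥ 0 and every z ∈ ℂ, Q_n(z)·P_n*(z) = P_n(z)·Q_n*(z). -/
open MeasureTheory Matrix Complex Finset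
open scoped ComplexOrder

section Infra

variable {N : ℕ} {a b : ℝ}

/-- Entrywise interval integrability. -/
def Int1 (a b : ℝ) {N : ℕ} (F : ℝ → Matrix (Fin N) (Fin N) ℂ) : Prop :=
  ∀ i j, IntervalIntegrable (fun x => F x i j) MeasureTheory.volume a b

lemma Int1.smul {F : ℝ → Matrix (Fin N) (Fin N) ℂ} (h : Int1 a b F) (c : ℂ) :
    Int1 a b (fun x => c • F x) := by
  intro i j
  simpa [Matrix.smul_apply, smul_eq_mul] using (h i j).const_mul c

lemma Int1.sum {ι : Type*} {s : Finset ι} {F : ι → ℝ → Matrix (Fin N) (Fin N) ℂ}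
    (h : ∀ k ∈ s, Int1 a b (F k)) :
    Int1 a b (fun x => ∑ k ∈ s, F k x) := by
  intro i j
  have e : (fun x => (∑ k ∈ s, F k x) i j) = ∑ k ∈ s, (fun x => F k x i j) := by
    funext x; simp [Matrix.sum_apply]
  rw [e]
  exact IntervalIntegrable.sum s fun k hk => h k hk i j

lemma Int1.const_mul {F : ℝ → Matrix (Fin N) (Fin N) ℂ} (h : Int1 a b F)
    (M : Matrix (Fin N) (Fin N) ℂ) : Int1 a b (fun x => M * F x) := by
  intro i j
  have e : (fun x => (M * F x) i j) = ∑ k : Fin N, (fun x => M i k * F x k j) := by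
    funext x; simp [Matrix.mul_apply]
  rw [e]
  exact IntervalIntegrable.sum _ fun k _ => (h k j).const_mul (M i k)

lemma Int1.mul_const {F : ℝ → Matrix (Fin N) (Fin N) ℂ} (h : Int1 a b F)
    (M : Matrix (Fin N) (Fin N) ℂ) : Int1 a b (fun x => F x * M) := by
  intro i j
  have e : (fun x => (F x * M) i j) = ∑ k : Fin N, (fun x => F x i k * M k j) := by
    funext x; simp [Matrix.mul_apply]
  rw [e]
  exact IntervalIntegrable.sum _ fun k _ => (h i k).mul_const (M k j)

lemma mint_smul (c : ℂ) (F : ℝ → Matrix (Fin N) (Fin N) ℂ) :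
    mint a b (fun x => c • F x) = c • mint a b F := by
  ext i j
  simp only [mint, Matrix.of_apply, Matrix.smul_apply, smul_eq_mul]
  exact intervalIntegral.integral_const_mul c _

lemma mint_sum {ι : Type*} (s : Finset ι) (F : ι → ℝ → Matrix (Fin N) (Fin N) ℂ)
    (h : ∀ k ∈ s, Int1 a b (F k)) :
    mint a b (fun x => ∑ k ∈ s, F k x) = ∑ k ∈ s, mint a b (F k) := by
  ext i j
  simp only [mint, Matrix.of_apply, Matrix.sum_apply]
  exact intervalIntegral.integral_finset_sum fun k hk => h k hk i j

lemma mint_sub {F G : ℝ → Matrix (Fin N) (Fin N) ℂ} (hF : Int1 a b F) (hG : Int1 a b G) :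
    mint a b (fun x => F x - G x) = mint a b F - mint a b G := by
  ext i j
  simp only [mint, Matrix.of_apply, Matrix.sub_apply]
  exact intervalIntegral.integral_sub (hF i j) (hG i j)

lemma mint_const_mul {F : ℝ → Matrix (Fin N) (Fin N) ℂ} (M : Matrix (Fin N) (Fin N) ℂ)
    (h : Int1 a b F) : mint a b (fun x => M * F x) = M * mint a b F := by
  ext i j
  simp only [mint, Matrix.of_apply, Matrix.mul_apply]
  rw [intervalIntegral.integral_finset_sum fun k _ => (h k j).const_mul (M i k)]
  simp [intervalIntegral.integral_const_mul]

lemma mint_mul_const {F : ℝ → Matrix (Fin N) (Fin N) ℂ} (M : Matrix (Fin N) (Fin N) ℂ)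
    (h : Int1 a b F) : mint a b (fun x => F x * M) = mint a b F * M := by
  ext i j
  simp only [mint, Matrix.of_apply, Matrix.mul_apply]
  rw [intervalIntegral.integral_finset_sum fun k _ => (h i k).mul_const (M k j)]
  simp [intervalIntegral.integral_mul_const]

lemma intervalIntegral_conj {f : ℝ → ℂ} :
    ∫ x in a..b, (starRingEnd ℂ) (f x) = (starRingEnd ℂ) (∫ x in a..b, f x) := by
  simp only [intervalIntegral]
  rw [integral_conj, integral_conj, map_sub]

lemma mint_conjT (F : ℝ → Matrix (Fin N) (Fin N) ℂ) :
    mint a b (fun x => (F x)ᴴ) = (mint a b F)ᴴ := by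
  ext i j
  simp only [mint, Matrix.of_apply, Matrix.conjTranspose_apply]
  exact intervalIntegral_conj

lemma mint_congr_ae {F G : ℝ → Matrix (Fin N) (Fin N) ℂ}
    (h : ∀ᵐ x ∂(volume : Measure ℝ), x ∈ Set.uIoc a b → F x = G x) :
    mint a b F = mint a b G := by
  ext i j
  exact intervalIntegral.integral_congr_ae (h.mono fun x hx hmem => by rw [hx hmem])

end Infra
section W
variable {N : ℕ} {a b : ℝ} {W : ℝ → Matrix (Fin N) (Fin N) ℂ}

lemma base_int (hab : a < b)
    (hWcont : ContinuousOn W (Set.Ioo a b))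
    (hWmom : ∀ (n : ℕ) (i j : Fin N),
      IntegrableOn (fun x : ℝ => |x| ^ n * ‖W x i j‖) (Set.Ioo a b))
    (k : ℕ) (i j : Fin N) :
    IntervalIntegrable (fun x : ℝ => (x : ℂ) ^ k * W x i j) volume a b := by
  rw [intervalIntegrable_iff_integrableOn_Ioc_of_le hab.le]
  have hWij : ContinuousOn (fun x => W x i j) (Set.Ioo a b) := by
    have hc : Continuous (fun M : Matrix (Fin N) (Fin N) ℂ => M i j) :=
      (continuous_apply j).comp (continuous_apply i)
    exact hc.comp_continuousOn hWcont
  have hmeas : AEStronglyMeasurable (fun x : ℝ => (x : ℂ) ^ k * W x i j)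
      (volume.restrict (Set.Ioo a b)) :=
    (((Complex.continuous_ofReal.pow k).continuousOn).mul hWij).aestronglyMeasurable
      measurableSet_Ioo
  have hIoo : IntegrableOn (fun x : ℝ => (x : ℂ) ^ k * W x i j) (Set.Ioo a b) volume := by
    refine Integrable.mono' (hWmom k i j) hmeas ?_
    refine Filter.Eventually.of_forall fun x => ?_
    simp [norm_mul, norm_pow, Real.norm_eq_abs, le_refl]
  exact hIoo.congr_set_ae Ioo_ae_eq_Ioc.symm

lemma int_left (hab : a < b)
    (hWcont : ContinuousOn W (Set.Ioo a b))
    (hWmom : ∀ (n : ℕ) (i j : Fin N),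
      IntegrableOn (fun x : ℝ => |x| ^ n * ‖W x i j‖) (Set.Ioo a b))
    (k : ℕ) (M : Matrix (Fin N) (Fin N) ℂ) :
    Int1 a b (fun x : ℝ => (x : ℂ) ^ k • (M * W x)) := by
  intro i j
  have e : (fun x : ℝ => ((x : ℂ) ^ k • (M * W x)) i j)
      = ∑ p : Fin N, fun x : ℝ => M i p * ((x : ℂ) ^ k * W x p j) := by
    funext x
    simp only [Matrix.smul_apply, Matrix.mul_apply, smul_eq_mul, Finset.sum_apply]
    rw [Finset.mul_sum]
    exact Finset.sum_congr rfl fun p _ => by ring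
  rw [e]
  exact IntervalIntegrable.sum _ fun p _ => (base_int hab hWcont hWmom k p j).const_mul _

lemma int_right (hab : a < b)
    (hWcont : ContinuousOn W (Set.Ioo a b))
    (hWmom : ∀ (n : ℕ) (i j : Fin N),
      IntegrableOn (fun x : ℝ => |x| ^ n * ‖W x i j‖) (Set.Ioo a b))
    (k : ℕ) (M : Matrix (Fin N) (Fin N) ℂ) :
    Int1 a b (fun x : ℝ => (x : ℂ) ^ k • (W x * M)) := by
  intro i j
  have e : (fun x : ℝ => ((x : ℂ) ^ k • (W x * M)) i j)
      = ∑ p : Fin N, fun x : ℝ => ((x : ℂ) ^ k * W x i p) * M p j := by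
    funext x
    simp only [Matrix.smul_apply, Matrix.mul_apply, smul_eq_mul, Finset.sum_apply]
    rw [Finset.mul_sum]
    exact Finset.sum_congr rfl fun p _ => by ring
  rw [e]
  exact IntervalIntegrable.sum _ fun p _ => (base_int hab hWcont hWmom k i p).mul_const _

end W
theorem stmt2
    (N : ℕ) (hN : 1 ≤ N) (a b : ℝ) (hab : a < b)
    (W : ℝ → Matrix (Fin N) (Fin N) ℂ)
    (hWcont : ContinuousOn W (Set.Ioo a b))
    (hWpos : ∀ x ∈ Set.Ioo a b, (W x).PosDef)
    (hWmom : ∀ (n : ℕ) (i j : Fin N),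
      IntegrableOn (fun x : ℝ => |x| ^ n * ‖W x i j‖) (Set.Ioo a b))
    (hWnt : ∀ (d : ℕ) (c : Fin (d + 1) → Matrix (Fin N) (Fin N) ℂ), (∃ k, c k ≠ 0) →
      IsUnit (mint a b (fun x =>
        (∑ k : Fin (d + 1), ((x : ℂ) ^ (k : ℕ)) • c k) * W x * (∑ k : Fin (d + 1), ((x : ℂ) ^ (k : ℕ)) • c k)ᴴ)))
    (aC : ℕ → ℤ → Matrix (Fin N) (Fin N) ℂ)
    (haDiag : ∀ n : ℕ, aC n n = 1)
    (haHigh : ∀ (n : ℕ) (j : ℤ), (n : ℤ) < j → aC n j = 0)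
    (haLow : ∀ (n : ℕ) (j : ℤ), j < 0 → aC n j = 0)
    (P : ℕ → ℂ → Matrix (Fin N) (Fin N) ℂ)
    (hP : ∀ (n : ℕ) (z : ℂ), P n z = ∑ j ∈ Finset.range (n + 1), z ^ j • aC n j)
    (horth : ∀ n j : ℕ, j < n →
      mint a b (fun x => ((x : ℂ) ^ j) • (P n (x : ℂ) * W x)) = 0)
    (γ : ℕ → Matrix (Fin N) (Fin N) ℂ)
    (hγ : ∀ n : ℕ, γ n * mint a b (fun x => P n (x : ℂ) * W x * (P n (x : ℂ))ᴴ) = 1)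
    (κ : ℕ → Matrix (Fin N) (Fin N) ℂ)
    (hκu : ∀ n : ℕ, IsUnit (κ n))
    (hκ : ∀ n : ℕ, (κ n)ᴴ * κ n = γ n)
    (Pn : ℕ → ℂ → Matrix (Fin N) (Fin N) ℂ)
    (hPn : ∀ (n : ℕ) (z : ℂ), Pn n z = κ n * P n z)
    (Q : ℕ → ℂ → Matrix (Fin N) (Fin N) ℂ)
    (hQ : ∀ (n : ℕ) (z : ℂ),
      Q n z = mint a b (fun t => ((t : ℂ) - z)⁻¹ • ((Pn n (t : ℂ) - Pn n z) * W t)))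
 :
    ∀ (n : ℕ) (z : ℂ),
      Q n z * (Pn n (starRingEnd ℂ z))ᴴ = Pn n z * (Q n (starRingEnd ℂ z))ᴴ := by
  intro n z
  -- abbreviations
  set A : ℕ → Matrix (Fin N) (Fin N) ℂ := fun j => κ n * aC n (j : ℤ) with hA
  have hPne : ∀ w : ℂ, Pn n w = ∑ j ∈ Finset.range (n + 1), w ^ j • A j := by
    intro w
    rw [hPn, hP, Finset.mul_sum]
    exact Finset.sum_congr rfl fun j _ => mul_smul_comm _ _ _
  set Ps : ℂ → Matrix (Fin N) (Fin N) ℂ :=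
    fun w => ∑ j ∈ Finset.range (n + 1), w ^ j • (A j)ᴴ with hPsdef
  have hPs : ∀ w : ℂ, (Pn n ((starRingEnd ℂ) w))ᴴ = Ps w := by
    intro w
    rw [hPne, hPsdef]
    rw [Matrix.conjTranspose_sum]
    refine Finset.sum_congr rfl fun j _ => ?_
    rw [Matrix.conjTranspose_smul, star_pow]
    simp
  have hPsR : ∀ t : ℝ, (Pn n (t : ℂ))ᴴ = Ps (t : ℂ) := by
    intro t
    have h := hPs (t : ℂ)
    rwa [Complex.conj_ofReal] at h
  set f : ℂ → Matrix (Fin N) (Fin N) ℂ :=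
    fun w => ∑ j ∈ Finset.range (n + 1),
      (∑ k ∈ Finset.range j, w ^ k * z ^ (j - 1 - k)) • A j with hfdef
  set g : ℂ → Matrix (Fin N) (Fin N) ℂ :=
    fun w => ∑ j ∈ Finset.range (n + 1),
      (∑ k ∈ Finset.range j, w ^ k * z ^ (j - 1 - k)) • (A j)ᴴ with hgdef
  have hf : ∀ w : ℂ, (w - z) • f w = Pn n w - Pn n z := by
    intro w
    rw [hPne w, hPne z, hfdef]
    rw [Finset.smul_sum, ← Finset.sum_sub_distrib]
    refine Finset.sum_congr rfl fun j _ => ?_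
    rw [smul_smul, mul_comm, geom_sum₂_mul, sub_smul]
  have hg : ∀ w : ℂ, (w - z) • g w = Ps w - Ps z := by
    intro w
    rw [hPsdef, hgdef]
    rw [Finset.smul_sum, ← Finset.sum_sub_distrib]
    refine Finset.sum_congr rfl fun j _ => ?_
    rw [smul_smul, mul_comm, geom_sum₂_mul, sub_smul]
  -- a.e. facts
  have aeStar : ∀ᵐ t ∂(volume : Measure ℝ),
      t ∈ Set.uIoc a b → ((t : ℂ) ≠ z ∧ (W t)ᴴ = W t) := by
    have hfin : (volume : Measure ℝ) ({z.re, b} : Set ℝ) = 0 :=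
      ((Set.finite_singleton b).insert z.re).measure_zero volume
    have h1 : ∀ᵐ t ∂(volume : Measure ℝ), t ∉ ({z.re, b} : Set ℝ) := by
      rw [ae_iff]
      refine measure_mono_null ?_ hfin
      intro t ht
      simp only [Set.mem_setOf_eq, not_not] at ht
      exact ht
    refine h1.mono fun t ht hmem => ?_
    have htb : t ≠ b := fun h => ht (by simp [h])
    have htz : t ≠ z.re := fun h => ht (by simp [h])
    have htIoo : t ∈ Set.Ioo a b := by
      rw [Set.uIoc_of_le hab.le] at hmem
      exact ⟨hmem.1, lt_of_le_of_ne hmem.2 htb⟩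
    refine ⟨fun h => htz (by rw [← h, Complex.ofReal_re]), (hWpos t htIoo).1⟩
  -- integrability of the basic blocks
  have intWPs : ∀ k : ℕ, Int1 a b (fun t : ℝ => (t : ℂ) ^ k • (W t * Ps (t : ℂ))) := by
    intro k
    have e : (fun t : ℝ => (t : ℂ) ^ k • (W t * Ps (t : ℂ)))
        = fun t : ℝ => ∑ l ∈ Finset.range (n + 1), (t : ℂ) ^ (k + l) • (W t * (A l)ᴴ) := by
      funext t
      rw [hPsdef]
      rw [Finset.mul_sum, Finset.smul_sum]
      refine Finset.sum_congr rfl fun l _ => ?_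
      rw [mul_smul_comm, smul_smul, ← pow_add]
    rw [e]
    exact Int1.sum fun l _ => int_right hab hWcont hWmom (k + l) _
  have intPnW : ∀ k : ℕ, Int1 a b (fun t : ℝ => (t : ℂ) ^ k • (Pn n (t : ℂ) * W t)) := by
    intro k
    have e : (fun t : ℝ => (t : ℂ) ^ k • (Pn n (t : ℂ) * W t))
        = fun t : ℝ => ∑ l ∈ Finset.range (n + 1), (t : ℂ) ^ (k + l) • (A l * W t) := by
      funext t
      rw [hPne]
      rw [Finset.sum_mul, Finset.smul_sum]
      refine Finset.sum_congr rfl fun l _ => ?_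
      rw [smul_mul_assoc, smul_smul, ← pow_add]
    rw [e]
    exact Int1.sum fun l _ => int_left hab hWcont hWmom (k + l) _
  have intPW : ∀ k : ℕ, Int1 a b (fun t : ℝ => (t : ℂ) ^ k • (P n (t : ℂ) * W t)) := by
    intro k
    have e : (fun t : ℝ => (t : ℂ) ^ k • (P n (t : ℂ) * W t))
        = fun t : ℝ => ∑ l ∈ Finset.range (n + 1), (t : ℂ) ^ (k + l) • (aC n (l : ℤ) * W t) := by
      funext t
      rw [hP]
      rw [Finset.sum_mul, Finset.smul_sum]
      refine Finset.sum_congr rfl fun l _ => ?_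
      rw [smul_mul_assoc, smul_smul, ← pow_add]
    rw [e]
    exact Int1.sum fun l _ => int_left hab hWcont hWmom (k + l) _
  -- orthogonality
  have orthPn : ∀ k : ℕ, k < n →
      mint a b (fun t : ℝ => (t : ℂ) ^ k • (Pn n (t : ℂ) * W t)) = 0 := by
    intro k hk
    have e : (fun t : ℝ => (t : ℂ) ^ k • (Pn n (t : ℂ) * W t))
        = fun t : ℝ => κ n * ((t : ℂ) ^ k • (P n (t : ℂ) * W t)) := by
      funext t
      rw [hPn, mul_smul_comm, mul_assoc]
    rw [e, mint_const_mul _ (intPW k), horth n k hk, mul_zero]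
  have orthStar : ∀ k : ℕ, k < n →
      mint a b (fun t : ℝ => (t : ℂ) ^ k • (W t * Ps (t : ℂ))) = 0 := by
    intro k hk
    have h0 : mint a b (fun t : ℝ => ((t : ℂ) ^ k • (Pn n (t : ℂ) * W t))ᴴ) = 0 := by
      rw [mint_conjT, orthPn k hk, Matrix.conjTranspose_zero]
    have e : mint a b (fun t : ℝ => (t : ℂ) ^ k • (W t * Ps (t : ℂ)))
        = mint a b (fun t : ℝ => ((t : ℂ) ^ k • (Pn n (t : ℂ) * W t))ᴴ) := by
      apply mint_congr_ae
      refine aeStar.mono fun t ht hmem => ?_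
      obtain ⟨-, hherm⟩ := ht hmem
      rw [Matrix.conjTranspose_smul, Matrix.conjTranspose_mul, hherm, hPsR t]
      congr 1
      rw [← Complex.ofReal_pow]
      simp [Complex.conj_ofReal]
    rw [e, h0]
  -- computing Q n z and (Q n z̄)ᴴ
  have hQz : Q n z = mint a b (fun t : ℝ => f (t : ℂ) * W t) := by
    rw [hQ]
    apply mint_congr_ae
    refine aeStar.mono fun t ht hmem => ?_
    obtain ⟨htz, -⟩ := ht hmem
    rw [← hf (t : ℂ), smul_mul_assoc, smul_smul,
      inv_mul_cancel₀ (sub_ne_zero.2 htz), one_smul]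
  have hQzs : (Q n ((starRingEnd ℂ) z))ᴴ = mint a b (fun t : ℝ => W t * g (t : ℂ)) := by
    rw [hQ, ← mint_conjT]
    apply mint_congr_ae
    refine aeStar.mono fun t ht hmem => ?_
    obtain ⟨htz, hherm⟩ := ht hmem
    rw [Matrix.conjTranspose_smul, Matrix.conjTranspose_mul, Matrix.conjTranspose_sub,
      hPsR t, hPs z, hherm, ← hg, mul_smul_comm, smul_smul]
    have hsc : star (((t : ℂ) - (starRingEnd ℂ) z)⁻¹) = ((t : ℂ) - z)⁻¹ := by
      rw [star_inv₀, star_sub]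
      simp [Complex.conj_ofReal]
    rw [hsc, inv_mul_cancel₀ (sub_ne_zero.2 htz), one_smul]
  -- main integrability facts
  have hint_fW : Int1 a b (fun t : ℝ => f (t : ℂ) * W t) := by
    have e : (fun t : ℝ => f (t : ℂ) * W t)
        = fun t : ℝ => ∑ j ∈ Finset.range (n + 1), ∑ k ∈ Finset.range j,
            z ^ (j - 1 - k) • ((t : ℂ) ^ k • (A j * W t)) := by
      funext t
      rw [hfdef]
      rw [Finset.sum_mul]
      refine Finset.sum_congr rfl fun j _ => ?_
      rw [smul_mul_assoc, Finset.sum_smul]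
      refine Finset.sum_congr rfl fun k _ => ?_
      rw [smul_smul]
      congr 1
      ring
    rw [e]
    exact Int1.sum fun j _ => Int1.sum fun k _ =>
      (int_left hab hWcont hWmom k (A j)).smul _
  have hint_Wg : Int1 a b (fun t : ℝ => W t * g (t : ℂ)) := by
    have e : (fun t : ℝ => W t * g (t : ℂ))
        = fun t : ℝ => ∑ j ∈ Finset.range (n + 1), ∑ k ∈ Finset.range j,
            z ^ (j - 1 - k) • ((t : ℂ) ^ k • (W t * (A j)ᴴ)) := by
      funext t
      rw [hgdef]
      rw [Finset.mul_sum]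
      refine Finset.sum_congr rfl fun j _ => ?_
      rw [mul_smul_comm, Finset.sum_smul]
      refine Finset.sum_congr rfl fun k _ => ?_
      rw [smul_smul]
      congr 1
      ring
    rw [e]
    exact Int1.sum fun j _ => Int1.sum fun k _ =>
      (int_right hab hWcont hWmom k ((A j)ᴴ)).smul _
  -- the two vanishing integrals
  have repA : (fun t : ℝ => f (t : ℂ) * W t * Ps (t : ℂ))
      = fun t : ℝ => ∑ j ∈ Finset.range (n + 1), ∑ k ∈ Finset.range j,
          z ^ (j - 1 - k) • (A j * ((t : ℂ) ^ k • (W t * Ps (t : ℂ)))) := by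
    funext t
    rw [hfdef, mul_assoc, Finset.sum_mul]
    refine Finset.sum_congr rfl fun j _ => ?_
    rw [smul_mul_assoc, Finset.sum_smul]
    refine Finset.sum_congr rfl fun k _ => ?_
    rw [mul_smul_comm, smul_smul]
    congr 1
    ring
  have repB : (fun t : ℝ => Pn n (t : ℂ) * (W t * g (t : ℂ)))
      = fun t : ℝ => ∑ j ∈ Finset.range (n + 1), ∑ k ∈ Finset.range j,
          z ^ (j - 1 - k) • (((t : ℂ) ^ k • (Pn n (t : ℂ) * W t)) * (A j)ᴴ) := by
    funext t
    rw [hgdef, Finset.mul_sum, Finset.mul_sum]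
    refine Finset.sum_congr rfl fun j _ => ?_
    rw [mul_smul_comm, mul_smul_comm, Finset.sum_smul]
    refine Finset.sum_congr rfl fun k _ => ?_
    rw [smul_mul_assoc, smul_smul, ← mul_assoc]
    congr 1
    ring
  have hint3 : Int1 a b (fun t : ℝ => f (t : ℂ) * W t * Ps (t : ℂ)) := by
    rw [repA]
    exact Int1.sum fun j _ => Int1.sum fun k _ => ((intWPs k).const_mul (A j)).smul _
  have hint4 : Int1 a b (fun t : ℝ => Pn n (t : ℂ) * (W t * g (t : ℂ))) := by
    rw [repB]
    exact Int1.sum fun j _ => Int1.sum fun k _ => ((intPnW k).mul_const ((A j)ᴴ)).smul _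
  have hmintA : mint a b (fun t : ℝ => f (t : ℂ) * W t * Ps (t : ℂ)) = 0 := by
    rw [repA, mint_sum _ _ (fun j _ => Int1.sum fun k _ =>
      ((intWPs k).const_mul (A j)).smul _)]
    refine Finset.sum_eq_zero fun j hj => ?_
    rw [mint_sum _ _ (fun k _ => ((intWPs k).const_mul (A j)).smul _)]
    refine Finset.sum_eq_zero fun k hk => ?_
    have hkn : k < n := lt_of_lt_of_le (Finset.mem_range.1 hk)
      (Nat.lt_succ_iff.1 (Finset.mem_range.1 hj))
    rw [mint_smul, mint_const_mul _ (intWPs k), orthStar k hkn, mul_zero, smul_zero]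
  have hmintB : mint a b (fun t : ℝ => Pn n (t : ℂ) * (W t * g (t : ℂ))) = 0 := by
    rw [repB, mint_sum _ _ (fun j _ => Int1.sum fun k _ =>
      ((intPnW k).mul_const ((A j)ᴴ)).smul _)]
    refine Finset.sum_eq_zero fun j hj => ?_
    rw [mint_sum _ _ (fun k _ => ((intPnW k).mul_const ((A j)ᴴ)).smul _)]
    refine Finset.sum_eq_zero fun k hk => ?_
    have hkn : k < n := lt_of_lt_of_le (Finset.mem_range.1 hk)
      (Nat.lt_succ_iff.1 (Finset.mem_range.1 hj))
    rw [mint_smul, mint_mul_const _ (intPnW k), orthPn k hkn, zero_mul, smul_zero]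
  -- assembling
  rw [hQz, hQzs, hPs z]
  rw [← mint_mul_const (Ps z) hint_fW, ← mint_const_mul (Pn n z) hint_Wg]
  rw [← sub_eq_zero, ← mint_sub (hint_fW.mul_const (Ps z)) (hint_Wg.const_mul (Pn n z))]
  have key : (fun t : ℝ => f (t : ℂ) * W t * Ps z - Pn n z * (W t * g (t : ℂ)))
      = fun t : ℝ => f (t : ℂ) * W t * Ps (t : ℂ) - Pn n (t : ℂ) * (W t * g (t : ℂ)) := by
    funext t
    have e1 : Ps z = Ps (t : ℂ) - ((t : ℂ) - z) • g (t : ℂ) := by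
      rw [hg]; exact (sub_sub_cancel _ _).symm
    have e2 : Pn n z = Pn n (t : ℂ) - ((t : ℂ) - z) • f (t : ℂ) := by
      rw [hf]; exact (sub_sub_cancel _ _).symm
    rw [e1, e2]
    simp only [mul_sub, sub_mul, smul_mul_assoc, mul_smul_comm, mul_assoc]
    abel
  rw [key, mint_sub hint3 hint4, hmintA, hmintB, sub_zero]
end

section
/- With R_n(z) the 2N×2N transfer matrix polynomial with blocks R_n(z)_{11} = κ_n^{-1}·P_n(z), R_n(z)_{12} = (2πi·κ_n)^{-1}·Q_n(z), R_n(z)_{21} = −2πi·κ_{n-1}*·P_{n-1}(z), R_n(z)_{22} = −κ_{n-1}*·Q_{n-1}(z), one has det R_n(z) = 1 for every n ≥ 1 and every z ∈ ℂ. -/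
open MeasureTheory Matrix Complex Finset
open scoped ComplexOrder

/-!
With `P̂_n = κ_n⁻¹ P_n` and `Q̂_n = κ_n⁻¹ Q_n`, everything is expressed through the
coefficients of the monic polynomials and the moments `J_m = ∫ x^m W`. Both `P̂` and `Q̂`
satisfy the three-term recurrence `z X_{n+1} = X_{n+2} + B X_{n+1} + C X_n` with
`C = ⟨P̂_{n+1}, x^{n+1}⟩ γ_n`: for the coefficients, the defect has degree `≤ n + 1` and is
orthogonal to `1, …, x^{n+1}`, so it vanishes by non-degeneracy; for `Q̂` the extra term
`∫ P̂_{n+1} W` vanishes by orthogonality. Hence `R_{n+1} = T_n R_n` where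
`T_n = [[z - B, s⁻¹ γ_n⁻¹], [-s γ_n, 0]]` has determinant one, and `R_1` has the shape of `T_0`.
-/

namespace Matrix

variable {n R : Type*} [Fintype n] [DecidableEq n] [CommRing R]

theorem det_fromBlocks_zero_one_one_zero :
    (fromBlocks 0 1 1 0 : Matrix (n ⊕ n) (n ⊕ n) R).det = (-1) ^ Fintype.card n := by
  have h : (fromBlocks 0 1 1 0 : Matrix (n ⊕ n) (n ⊕ n) R)
      = fromBlocks 1 1 0 1 * fromBlocks 1 0 (-1) 1 * fromBlocks 1 1 0 1
        * fromBlocks (-1) 0 0 1 := by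
    simp [fromBlocks_multiply]
  simp [h, det_neg]

theorem det_fromBlocks_zero₂₂ (A B C : Matrix n n R) :
    (fromBlocks A B C 0).det = (-(B * C)).det := by
  have h : fromBlocks A B C 0
      = (fromBlocks 0 1 1 0 : Matrix (n ⊕ n) (n ⊕ n) R) * fromBlocks C 0 A B := by
    simp [fromBlocks_multiply]
  rw [h, det_mul, det_fromBlocks_zero_one_one_zero, det_fromBlocks_zero₁₂, det_neg, det_mul]
  ring

end Matrix

namespace MatrixOrthogonalPolynomials

abbrev Mat (N : ℕ) := Matrix (Fin N) (Fin N) ℂ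

variable {N : ℕ}

section Coefficients

def evalPoly (c : ℕ → Mat N) (d : ℕ) (z : ℂ) : Mat N :=
  ∑ j ∈ range (d + 1), z ^ j • c j

/-- The coefficients of `t ↦ (p t - p z) / (t - z)` for `p = evalPoly c d`. -/
def divDiff (c : ℕ → Mat N) (d : ℕ) (z : ℂ) (k : ℕ) : Mat N :=
  ∑ i ∈ range (d - k), z ^ i • c (k + 1 + i)

def shift (c : ℕ → Mat N) : ℕ → Mat N
  | 0 => 0
  | k + 1 => c k

variable {c : ℕ → Mat N} {d D : ℕ}

theorem evalPoly_conjTranspose (c : ℕ → Mat N) (d : ℕ) (x : ℝ) :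
    (evalPoly c d x)ᴴ = evalPoly (fun k => (c k)ᴴ) d x := by
  simp [evalPoly, conjTranspose_sum, conjTranspose_smul, ← ofReal_pow]

theorem evalPoly_eq_of_le (hc : ∀ j, d < j → c j = 0) (h : d ≤ D) (z : ℂ) :
    evalPoly c D z = evalPoly c d z :=
  eventually_constant_sum (fun j hj => by rw [hc j hj, smul_zero]) (by omega)

theorem evalPoly_sub (c e : ℕ → Mat N) (d : ℕ) (z : ℂ) :
    evalPoly (c - e) d z = evalPoly c d z - evalPoly e d z := by
  simp only [evalPoly, Pi.sub_apply, smul_sub, sum_sub_distrib]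

theorem evalPoly_smul (B : Mat N) (c : ℕ → Mat N) (d : ℕ) (z : ℂ) :
    evalPoly (B • c) d z = B * evalPoly c d z := by
  simp only [evalPoly, Pi.smul_apply, smul_eq_mul, mul_sum, mul_smul_comm]

theorem evalPoly_shift (c : ℕ → Mat N) (d : ℕ) (z : ℂ) :
    evalPoly (shift c) (d + 1) z = z • evalPoly c d z := by
  simp [evalPoly, sum_range_succ' _ (d + 1), shift, smul_sum, pow_succ', smul_smul]

theorem divDiff_eq_zero_of_le {k : ℕ} (c : ℕ → Mat N) (z : ℂ) (h : d ≤ k) :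
    divDiff c d z k = 0 := by
  simp [divDiff, Nat.sub_eq_zero_of_le h]

theorem divDiff_succ {k : ℕ} (c : ℕ → Mat N) (z : ℂ) (hk : k ≤ d) :
    divDiff c (d + 1) z k = divDiff c d z k + z ^ (d - k) • c (d + 1) := by
  rw [divDiff, divDiff, show d + 1 - k = d - k + 1 by omega, sum_range_succ,
    show k + 1 + (d - k) = d + 1 by omega]

theorem evalPoly_sub_evalPoly (c : ℕ → Mat N) (d : ℕ) (t z : ℂ) :
    evalPoly c d t - evalPoly c d z = (t - z) • evalPoly (divDiff c d z) d t := by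
  induction d with
  | zero => simp [evalPoly, divDiff]
  | succ d ih =>
    have hsplit : evalPoly (divDiff c (d + 1) z) (d + 1) t
        = evalPoly (divDiff c d z) d t
          + (∑ k ∈ range (d + 1), t ^ k * z ^ (d - k)) • c (d + 1) := by
      rw [evalPoly, sum_range_succ, divDiff_eq_zero_of_le c z le_rfl, smul_zero, add_zero,
        sum_congr rfl fun k hk => by
          rw [divDiff_succ c z (Nat.lt_succ_iff.mp (mem_range.mp hk)), smul_add, smul_smul],
        sum_add_distrib, sum_smul, evalPoly]
    have hgeom :
        (∑ k ∈ range (d + 1), t ^ k * z ^ (d - k)) * (t - z) = t ^ (d + 1) - z ^ (d + 1) := by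
      simpa using geom_sum₂_mul t z (d + 1)
    rw [hsplit, smul_add, ← ih, smul_smul, mul_comm, hgeom, sub_smul]
    simp only [evalPoly, sum_range_succ _ (d + 1)]
    abel

theorem divDiff_shift {k : ℕ} (c : ℕ → Mat N) (z : ℂ) (hk : k ≤ d) :
    divDiff (shift c) (d + 1) z k = c k + z • divDiff c d z k := by
  rw [divDiff, divDiff, show d + 1 - k = d - k + 1 by omega, sum_range_succ', smul_sum]
  simp [shift, pow_succ', smul_smul, add_comm, ← add_assoc]

end Coefficients

section Moments

variable (J : ℕ → Mat N)

/-- `∫ p(x) W(x) x^k dx` for `p = evalPoly c d`, where `J m = ∫ x^m W(x) dx`. -/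
def momentAgainst (c : ℕ → Mat N) (d k : ℕ) : Mat N :=
  ∑ j ∈ range (d + 1), c j * J (j + k)

/-- `∫ (p(t) - p(z)) / (t - z) W(t) dt` for `p = evalPoly c d`. -/
def secondKind (c : ℕ → Mat N) (d : ℕ) (z : ℂ) : Mat N :=
  ∑ k ∈ range (d + 1), divDiff c d z k * J k

variable {J} {c : ℕ → Mat N} {d D : ℕ}

theorem momentAgainst_eq_of_le (hc : ∀ j, d < j → c j = 0) (h : d ≤ D) (k : ℕ) :
    momentAgainst J c D k = momentAgainst J c d k :=
  eventually_constant_sum (fun j hj => by rw [hc j hj, zero_mul]) (by omega)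

theorem momentAgainst_sub (c e : ℕ → Mat N) (d k : ℕ) :
    momentAgainst J (c - e) d k = momentAgainst J c d k - momentAgainst J e d k := by
  simp only [momentAgainst, Pi.sub_apply, sub_mul, sum_sub_distrib]

theorem momentAgainst_smul (B : Mat N) (c : ℕ → Mat N) (d k : ℕ) :
    momentAgainst J (B • c) d k = B * momentAgainst J c d k := by
  simp only [momentAgainst, Pi.smul_apply, smul_eq_mul, mul_sum, mul_assoc]

theorem momentAgainst_shift (c : ℕ → Mat N) (d k : ℕ) :
    momentAgainst J (shift c) (d + 1) k = momentAgainst J c d (k + 1) := by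
  rw [momentAgainst, sum_range_succ']
  simp only [shift, zero_mul, add_zero]
  exact sum_congr rfl fun j _ => by rw [add_right_comm, add_assoc]

theorem secondKind_eq_of_le (hc : ∀ j, d < j → c j = 0) (h : d ≤ D) (z : ℂ) :
    secondKind J c D z = secondKind J c d z := by
  have hdiv : ∀ k, divDiff c D z k = divDiff c d z k := fun k =>
    eventually_constant_sum (fun i hi => by rw [hc _ (by omega), smul_zero]) (by omega)
  simp only [secondKind, hdiv]
  exact eventually_constant_sum (fun k hk => by rw [divDiff_eq_zero_of_le c z (by omega), zero_mul])
    (by omega)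

theorem secondKind_sub (c e : ℕ → Mat N) (d : ℕ) (z : ℂ) :
    secondKind J (c - e) d z = secondKind J c d z - secondKind J e d z := by
  simp only [secondKind, divDiff, Pi.sub_apply, smul_sub, sum_sub_distrib, sub_mul]

theorem secondKind_smul (B : Mat N) (c : ℕ → Mat N) (d : ℕ) (z : ℂ) :
    secondKind J (B • c) d z = B * secondKind J c d z := by
  simp only [secondKind, divDiff, Pi.smul_apply, smul_eq_mul, mul_sum, sum_mul, ← mul_smul_comm,
    mul_assoc]

theorem secondKind_shift (c : ℕ → Mat N) (d : ℕ) (z : ℂ) :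
    secondKind J (shift c) (d + 1) z = z • secondKind J c d z + momentAgainst J c d 0 := by
  rw [secondKind, sum_range_succ, divDiff_eq_zero_of_le _ z le_rfl, zero_mul, add_zero,
    sum_congr rfl fun k hk => by rw [divDiff_shift c z (Nat.lt_succ_iff.mp (mem_range.mp hk))]]
  simp only [add_mul, sum_add_distrib, smul_mul_assoc, ← smul_sum, secondKind, momentAgainst,
    add_zero]
  abel

end Moments

section Recurrence

structure IsMonicOrthogonal (J : ℕ → Mat N) (A : ℕ → ℕ → Mat N) : Prop where
  coeff_self : ∀ n, A n n = 1
  coeff_of_lt : ∀ n k, n < k → A n k = 0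
  momentAgainst_of_lt : ∀ {n k}, k < n → momentAgainst J (A n) n k = 0

def MomentNondegenerate (J : ℕ → Mat N) : Prop :=
  ∀ d (c : ℕ → Mat N), ∑ k ∈ range (d + 1), momentAgainst J c d k * (c k)ᴴ = 0 → ∀ k ≤ d, c k = 0

variable {J : ℕ → Mat N} {A : ℕ → ℕ → Mat N} {γ : ℕ → Mat N}

theorem MomentNondegenerate.eq_zero (hJ : MomentNondegenerate J) {c : ℕ → Mat N} {d : ℕ}
    (h : ∀ k ≤ d, momentAgainst J c d k = 0) : ∀ k ≤ d, c k = 0 :=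
  hJ d c (sum_eq_zero fun k hk => by rw [h k (Nat.lt_succ_iff.mp (mem_range.mp hk)), zero_mul])

def recurrenceDefect (A : ℕ → ℕ → Mat N) (B C : Mat N) (m : ℕ) : ℕ → Mat N :=
  shift (A (m + 1)) - A (m + 2) - B • A (m + 1) - C • A m

namespace IsMonicOrthogonal

variable (hA : IsMonicOrthogonal J A)
include hA

theorem sum_momentAgainst_mul_conjTranspose (n : ℕ) :
    ∑ k ∈ range (n + 1), momentAgainst J (A n) n k * (A n k)ᴴ = momentAgainst J (A n) n n := by
  rw [sum_range_succ, sum_eq_zero fun k hk => by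
    rw [hA.momentAgainst_of_lt (mem_range.mp hk), zero_mul], hA.coeff_self, conjTranspose_one,
    mul_one, zero_add]

theorem recurrenceDefect_of_lt (B C : Mat N) (m : ℕ) {j : ℕ} (hj : m + 1 < j) :
    recurrenceDefect A B C m j = 0 := by
  obtain ⟨i, rfl⟩ : ∃ i, j = i + 1 := ⟨j - 1, by omega⟩
  rcases (show m + 1 = i ∨ m + 1 < i by omega) with rfl | hi
  · simp [recurrenceDefect, shift, hA.coeff_self, hA.coeff_of_lt (m + 1) (m + 2) (by omega),
      hA.coeff_of_lt m (m + 2) (by omega)]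
  · simp [recurrenceDefect, shift, hA.coeff_of_lt (m + 1) i hi,
      hA.coeff_of_lt (m + 2) (i + 1) (by omega), hA.coeff_of_lt (m + 1) (i + 1) (by omega),
      hA.coeff_of_lt m (i + 1) (by omega)]

theorem momentAgainst_recurrenceDefect (B C : Mat N) (m k : ℕ) :
    momentAgainst J (recurrenceDefect A B C m) (m + 2) k
      = momentAgainst J (A (m + 1)) (m + 1) (k + 1) - momentAgainst J (A (m + 2)) (m + 2) k
        - B * momentAgainst J (A (m + 1)) (m + 1) k - C * momentAgainst J (A m) m k := by
  rw [recurrenceDefect, momentAgainst_sub, momentAgainst_sub, momentAgainst_sub, momentAgainst_smul,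
    momentAgainst_smul, momentAgainst_shift,
    momentAgainst_eq_of_le (hA.coeff_of_lt (m + 1)) (by omega : m + 1 ≤ m + 2),
    momentAgainst_eq_of_le (hA.coeff_of_lt m) (by omega : m ≤ m + 2)]

theorem exists_shift_eq (hJ : MomentNondegenerate J)
    (hγ : ∀ n, γ n * momentAgainst J (A n) n n = 1) (m : ℕ) :
    ∃ B : Mat N, shift (A (m + 1)) = A (m + 2) + B • A (m + 1)
      + (momentAgainst J (A (m + 1)) (m + 1) (m + 1) * γ m) • A m := by
  set C := momentAgainst J (A (m + 1)) (m + 1) (m + 1) * γ m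
  set B := (momentAgainst J (A (m + 1)) (m + 1) (m + 2)
    - C * momentAgainst J (A m) m (m + 1)) * γ (m + 1)
  -- `C` and `B` make the defect orthogonal to `x^m` and `x^(m+1)`; lower powers are automatic.
  have hmom : ∀ k ≤ m + 1, momentAgainst J (recurrenceDefect A B C m) (m + 1) k = 0 := by
    intro k hk
    rw [← momentAgainst_eq_of_le (fun j => hA.recurrenceDefect_of_lt B C m)
        (by omega : m + 1 ≤ m + 2), hA.momentAgainst_recurrenceDefect,
      hA.momentAgainst_of_lt (by omega : k < m + 2)]
    rcases (show k < m ∨ k = m ∨ k = m + 1 by omega) with hk | hk | hk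
    · simp [hA.momentAgainst_of_lt (by omega : k + 1 < m + 1),
        hA.momentAgainst_of_lt (by omega : k < m + 1), hA.momentAgainst_of_lt hk]
    · rw [hk]
      simp [C, hA.momentAgainst_of_lt (by omega : m < m + 1), mul_assoc, hγ m]
    · rw [hk]
      simp [B, mul_assoc, hγ (m + 1)]
  have hzero : recurrenceDefect A B C m = 0 :=
    funext fun k => (le_or_gt k (m + 1)).elim (hJ.eq_zero hmom k) (hA.recurrenceDefect_of_lt B C m)
  refine ⟨B, ?_⟩
  rw [← sub_eq_zero, ← hzero, recurrenceDefect]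
  abel

variable {B C : Mat N} {m : ℕ}
  (hrec : shift (A (m + 1)) = A (m + 2) + B • A (m + 1) + C • A m)
include hrec

theorem evalPoly_succ_succ (z : ℂ) :
    evalPoly (A (m + 2)) (m + 2) z
      = (z • 1 - B) * evalPoly (A (m + 1)) (m + 1) z - C * evalPoly (A m) m z := by
  rw [show A (m + 2) = shift (A (m + 1)) - B • A (m + 1) - C • A m by rw [hrec]; abel,
    evalPoly_sub, evalPoly_sub, evalPoly_smul, evalPoly_smul, evalPoly_shift,
    evalPoly_eq_of_le (hA.coeff_of_lt (m + 1)) (by omega : m + 1 ≤ m + 2),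
    evalPoly_eq_of_le (hA.coeff_of_lt m) (by omega : m ≤ m + 2), sub_mul, smul_mul_assoc, one_mul]

theorem secondKind_succ_succ (z : ℂ) :
    secondKind J (A (m + 2)) (m + 2) z
      = (z • 1 - B) * secondKind J (A (m + 1)) (m + 1) z - C * secondKind J (A m) m z := by
  rw [show A (m + 2) = shift (A (m + 1)) - B • A (m + 1) - C • A m by rw [hrec]; abel,
    secondKind_sub, secondKind_sub, secondKind_smul, secondKind_smul, secondKind_shift,
    hA.momentAgainst_of_lt (by omega : 0 < m + 1), add_zero,
    secondKind_eq_of_le (hA.coeff_of_lt (m + 1)) (by omega : m + 1 ≤ m + 2),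
    secondKind_eq_of_le (hA.coeff_of_lt m) (by omega : m ≤ m + 2), sub_mul, smul_mul_assoc,
    one_mul]

end IsMonicOrthogonal

end Recurrence

section Transfer

/-- The matrix `R_n(z)` of the statement, written with `evalPoly (A n) n = κ_n⁻¹ P_n`,
`secondKind J (A n) n = κ_n⁻¹ Q_n` and `γ = κᴴ κ`. -/
noncomputable def transferMatrix (J : ℕ → Mat N) (A : ℕ → ℕ → Mat N) (γ : ℕ → Mat N) (s : ℂ) (n : ℕ)
    (z : ℂ) : Matrix (Fin N ⊕ Fin N) (Fin N ⊕ Fin N) ℂ :=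
  fromBlocks (evalPoly (A n) n z) (s⁻¹ • secondKind J (A n) n z)
    (-(s • (γ (n - 1) * evalPoly (A (n - 1)) (n - 1) z)))
    (-(γ (n - 1) * secondKind J (A (n - 1)) (n - 1) z))

noncomputable def transferStep (X G Γ : Mat N) (s : ℂ) : Matrix (Fin N ⊕ Fin N) (Fin N ⊕ Fin N) ℂ :=
  fromBlocks X (s⁻¹ • G) (-(s • Γ)) 0

theorem det_transferStep {X G Γ : Mat N} {s : ℂ} (h : Γ * G = 1) (hs : s ≠ 0) :
    (transferStep X G Γ s).det = 1 := by
  rw [transferStep, det_fromBlocks_zero₂₂, mul_neg, neg_neg, smul_mul_smul_comm,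
    inv_mul_cancel₀ hs, one_smul, mul_eq_one_comm.mp h, det_one]

variable {J : ℕ → Mat N} {A : ℕ → ℕ → Mat N} {γ : ℕ → Mat N} {s : ℂ}

theorem IsMonicOrthogonal.transferMatrix_one (hA : IsMonicOrthogonal J A) (z : ℂ) :
    transferMatrix J A γ s 1 z
      = transferStep (evalPoly (A 1) 1 z) (momentAgainst J (A 0) 0 0) (γ 0) s := by
  have hP : evalPoly (A 0) 0 z = 1 := by simp [evalPoly, hA.coeff_self]
  have hQ₀ : secondKind J (A 0) 0 z = 0 := by simp [secondKind, divDiff]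
  have hQ₁ : secondKind J (A 1) 1 z = momentAgainst J (A 0) 0 0 := by
    simp [secondKind, momentAgainst, divDiff, sum_range_succ, hA.coeff_self]
  rw [transferMatrix, transferStep, Nat.sub_self, hP, hQ₀, hQ₁, mul_one, mul_zero, neg_zero]

theorem IsMonicOrthogonal.transferMatrix_succ_succ (hA : IsMonicOrthogonal J A) (hs : s ≠ 0)
    {B : Mat N} {m : ℕ}
    (hrec : shift (A (m + 1)) = A (m + 2) + B • A (m + 1)
      + (momentAgainst J (A (m + 1)) (m + 1) (m + 1) * γ m) • A m) (z : ℂ) :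
    transferMatrix J A γ s (m + 2) z
      = transferStep (z • 1 - B) (momentAgainst J (A (m + 1)) (m + 1) (m + 1)) (γ (m + 1)) s
        * transferMatrix J A γ s (m + 1) z := by
  simp only [transferMatrix, transferStep, fromBlocks_multiply, Nat.add_sub_cancel,
    hA.evalPoly_succ_succ hrec, hA.secondKind_succ_succ hrec]
  congr 1 <;> simp [hs, mul_assoc, smul_smul, sub_eq_add_neg]

theorem IsMonicOrthogonal.det_transferMatrix (hA : IsMonicOrthogonal J A)
    (hJ : MomentNondegenerate J) (hγ : ∀ n, γ n * momentAgainst J (A n) n n = 1) (hs : s ≠ 0)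
    (n : ℕ) (hn : 1 ≤ n) (z : ℂ) : (transferMatrix J A γ s n z).det = 1 := by
  obtain ⟨m, rfl⟩ : ∃ m, n = m + 1 := ⟨n - 1, by omega⟩
  induction m with
  | zero => rw [hA.transferMatrix_one, det_transferStep (hγ 0) hs]
  | succ m ih =>
    obtain ⟨B, hrec⟩ := hA.exists_shift_eq hJ hγ m
    rw [hA.transferMatrix_succ_succ hs hrec, det_mul, det_transferStep (hγ (m + 1)) hs,
      ih (by omega), one_mul]

end Transfer

section Integrals

variable {a b : ℝ} {W : ℝ → Mat N}

noncomputable def moments (a b : ℝ) (W : ℝ → Mat N) (m : ℕ) : Mat N :=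
  mint a b fun x => (x : ℂ) ^ m • W x

theorem integrableOn_pow_mul_apply (hWcont : ContinuousOn W (Set.Ioo a b))
    (hWmom : ∀ (n : ℕ) (i j : Fin N),
      IntegrableOn (fun x : ℝ => |x| ^ n * ‖W x i j‖) (Set.Ioo a b)) (m : ℕ) (i j : Fin N) :
    IntegrableOn (fun x : ℝ => (x : ℂ) ^ m * W x i j) (Set.Ioo a b) := by
  refine (hWmom m i j).mono' ?_ (Filter.Eventually.of_forall fun x => ?_)
  · refine ContinuousOn.aestronglyMeasurable ?_ measurableSet_Ioo
    exact (continuous_ofReal.pow m).continuousOn.mul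
      ((continuous_id.matrix_elem i j).comp_continuousOn hWcont)
  · simp

theorem mint_apply (hab : a ≤ b) (F : ℝ → Mat N) (i j : Fin N) :
    mint a b F i j = ∫ x in Set.Ioo a b, F x i j := by
  rw [mint, of_apply, intervalIntegral.integral_of_le hab, integral_Ioc_eq_integral_Ioo]

theorem mint_sum_mul_pow_smul_mul (hab : a ≤ b)
    (hW : ∀ m i j, IntegrableOn (fun x : ℝ => (x : ℂ) ^ m * W x i j) (Set.Ioo a b))
    {ι : Type*} (s : Finset ι) (L R : ι → Mat N) (m : ι → ℕ) :
    mint a b (fun x => ∑ i ∈ s, L i * ((x : ℂ) ^ m i • W x) * R i)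
      = ∑ i ∈ s, L i * moments a b W (m i) * R i := by
  ext p q
  have hint : ∀ i u v, Integrable (fun x : ℝ => L i p u * ((x : ℂ) ^ m i * W x u v) * R i v q)
      (volume.restrict (Set.Ioo a b)) := fun i u v => ((hW (m i) u v).const_mul _).mul_const _
  simp only [mint_apply hab, moments, Matrix.sum_apply, mul_apply, Matrix.smul_apply, smul_eq_mul,
    sum_mul]
  rw [integral_finsetSum _ fun i _ =>
    integrable_finsetSum _ fun v _ => integrable_finsetSum _ fun u _ => hint i u v]
  refine sum_congr rfl fun i _ => ?_
  rw [integral_finsetSum _ fun v _ => integrable_finsetSum _ fun u _ => hint i u v]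
  refine sum_congr rfl fun v _ => ?_
  rw [integral_finsetSum _ fun u _ => hint i u v]
  exact sum_congr rfl fun u _ => by rw [integral_mul_const, integral_const_mul]

variable (hab : a ≤ b)
  (hW : ∀ m i j, IntegrableOn (fun x : ℝ => (x : ℂ) ^ m * W x i j) (Set.Ioo a b))
include hab hW

theorem mint_pow_smul_evalPoly_mul (c : ℕ → Mat N) (d k : ℕ) :
    mint a b (fun x => (x : ℂ) ^ k • (evalPoly c d x * W x))
      = momentAgainst (moments a b W) c d k := by
  have h : ∀ x : ℝ, (x : ℂ) ^ k • (evalPoly c d x * W x)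
      = ∑ j ∈ range (d + 1), c j * ((x : ℂ) ^ (j + k) • W x) * 1 := fun x => by
    simp only [evalPoly, sum_mul, smul_sum, smul_mul_assoc, mul_smul_comm, smul_smul, pow_add,
      mul_comm, mul_one]
  rw [funext h, mint_sum_mul_pow_smul_mul hab hW]
  simp only [momentAgainst, mul_one]

theorem mint_evalPoly_mul_mul_evalPoly (c : ℕ → Mat N) (d : ℕ) (e : ℕ → Mat N) (d' : ℕ) :
    mint a b (fun x => evalPoly c d x * W x * evalPoly e d' x)
      = ∑ k ∈ range (d' + 1), momentAgainst (moments a b W) c d k * e k := by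
  have h : ∀ x : ℝ, evalPoly c d x * W x * evalPoly e d' x
      = ∑ jk ∈ range (d + 1) ×ˢ range (d' + 1), c jk.1 * ((x : ℂ) ^ (jk.1 + jk.2) • W x) * e jk.2 :=
    fun x => by
      rw [evalPoly, evalPoly, sum_mul, sum_mul_sum, sum_product]
      refine sum_congr rfl fun j _ => sum_congr rfl fun k _ => ?_
      simp only [smul_mul_assoc, mul_smul_comm, smul_smul, ← pow_add, add_comm k j]
  rw [funext h, mint_sum_mul_pow_smul_mul hab hW, sum_product, sum_comm]
  simp only [momentAgainst, sum_mul]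

theorem mint_divDiff (L : Mat N) (c : ℕ → Mat N) (d : ℕ) (z : ℂ) :
    mint a b (fun t => ((t : ℂ) - z)⁻¹ • ((L * evalPoly c d t - L * evalPoly c d z) * W t))
      = L * secondKind (moments a b W) c d z := by
  set F := fun t : ℝ => ((t : ℂ) - z)⁻¹ • ((L * evalPoly c d t - L * evalPoly c d z) * W t)
  set G := fun t : ℝ => ∑ k ∈ range (d + 1), (L * divDiff c d z k) * ((t : ℂ) ^ k • W t) * 1
  have hFG : ∀ t : ℝ, (t : ℂ) ≠ z → F t = G t := fun t ht => by
    simp only [F, G]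
    rw [← mul_sub, evalPoly_sub_evalPoly, mul_smul_comm, smul_mul_assoc, smul_smul,
      inv_mul_cancel₀ (sub_ne_zero.mpr ht), one_smul, evalPoly]
    simp only [mul_sum, sum_mul, mul_one, mul_smul_comm, smul_mul_assoc, mul_assoc]
  have hae : ∀ᵐ t : ℝ ∂volume.restrict (Set.Ioo a b), (t : ℂ) ≠ z :=
    ae_restrict_of_ae <| ((Set.countable_singleton z.re).ae_notMem (volume : Measure ℝ)).mono
      fun t ht heq => ht (by simp [← heq])
  have hmint : mint a b F = mint a b G := by
    ext i j
    rw [mint_apply hab, mint_apply hab]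
    exact integral_congr_ae (hae.mono fun t ht => congr_fun (congr_fun (hFG t ht) i) j)
  rw [hmint, mint_sum_mul_pow_smul_mul hab hW, secondKind, mul_sum]
  simp only [mul_one, mul_assoc]

theorem momentNondegenerate_moments [NeZero N]
    (hWnt : ∀ (d : ℕ) (c : Fin (d + 1) → Matrix (Fin N) (Fin N) ℂ), (∃ k, c k ≠ 0) →
      IsUnit (mint a b (fun x =>
        (∑ k : Fin (d + 1), ((x : ℂ) ^ (k : ℕ)) • c k) * W x
          * (∑ k : Fin (d + 1), ((x : ℂ) ^ (k : ℕ)) • c k)ᴴ))) :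
    MomentNondegenerate (moments a b W) := by
  intro d c hc k hk
  by_contra hck
  have hsum : ∀ x : ℝ, ∑ k : Fin (d + 1), ((x : ℂ) ^ (k : ℕ)) • c k = evalPoly c d x := fun x =>
    Fin.sum_univ_eq_sum_range (fun k => (x : ℂ) ^ k • c k) (d + 1)
  have hunit := hWnt d (fun k => c k) ⟨⟨k, by omega⟩, hck⟩
  simp only [hsum, evalPoly_conjTranspose, mint_evalPoly_mul_mul_evalPoly hab hW, hc] at hunit
  exact not_isUnit_zero hunit

end Integrals

end MatrixOrthogonalPolynomials

open MatrixOrthogonalPolynomials in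
theorem stmt5_general
    (N : ℕ) (hN : 1 ≤ N) (a b : ℝ) (hab : a < b)
    (W : ℝ → Matrix (Fin N) (Fin N) ℂ)
    (hWcont : ContinuousOn W (Set.Ioo a b))
    (hWmom : ∀ (n : ℕ) (i j : Fin N),
      IntegrableOn (fun x : ℝ => |x| ^ n * ‖W x i j‖) (Set.Ioo a b))
    (hWnt : ∀ (d : ℕ) (c : Fin (d + 1) → Matrix (Fin N) (Fin N) ℂ), (∃ k, c k ≠ 0) →
      IsUnit (mint a b (fun x =>
        (∑ k : Fin (d + 1), ((x : ℂ) ^ (k : ℕ)) • c k) * W x * (∑ k : Fin (d + 1), ((x : ℂ) ^ (k : ℕ)) • c k)ᴴ)))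
    (aC : ℕ → ℤ → Matrix (Fin N) (Fin N) ℂ)
    (haDiag : ∀ n : ℕ, aC n n = 1)
    (haHigh : ∀ (n : ℕ) (j : ℤ), (n : ℤ) < j → aC n j = 0)
    (P : ℕ → ℂ → Matrix (Fin N) (Fin N) ℂ)
    (hP : ∀ (n : ℕ) (z : ℂ), P n z = ∑ j ∈ Finset.range (n + 1), z ^ j • aC n j)
    (horth : ∀ n j : ℕ, j < n →
      mint a b (fun x => ((x : ℂ) ^ j) • (P n (x : ℂ) * W x)) = 0)
    (γ : ℕ → Matrix (Fin N) (Fin N) ℂ)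
    (hγ : ∀ n : ℕ, γ n * mint a b (fun x => P n (x : ℂ) * W x * (P n (x : ℂ))ᴴ) = 1)
    (κ : ℕ → Matrix (Fin N) (Fin N) ℂ)
    (hκu : ∀ n : ℕ, IsUnit (κ n))
    (hκ : ∀ n : ℕ, (κ n)ᴴ * κ n = γ n)
    (Pn : ℕ → ℂ → Matrix (Fin N) (Fin N) ℂ)
    (hPn : ∀ (n : ℕ) (z : ℂ), Pn n z = κ n * P n z)
    (Q : ℕ → ℂ → Matrix (Fin N) (Fin N) ℂ)
    (hQ : ∀ (n : ℕ) (z : ℂ),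
      Q n z = mint a b (fun t => ((t : ℂ) - z)⁻¹ • ((Pn n (t : ℂ) - Pn n z) * W t)))
 :
    ∀ n : ℕ, 1 ≤ n → ∀ z : ℂ,
      (Matrix.fromBlocks
          ((κ n)⁻¹ * Pn n z)
          ((2 * (Real.pi : ℂ) * Complex.I)⁻¹ • ((κ n)⁻¹ * Q n z))
          (-((2 * (Real.pi : ℂ) * Complex.I) • ((κ (n - 1))ᴴ * Pn (n - 1) z)))
          (-((κ (n - 1))ᴴ * Q (n - 1) z))).det = 1 := by
  intro n hn z
  have : NeZero N := ⟨by omega⟩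
  have hW := integrableOn_pow_mul_apply hWcont hWmom
  set A : ℕ → ℕ → Mat N := fun n k => aC n k
  have hPA : P = fun n z => evalPoly (A n) n z := funext₂ hP
  have hA : IsMonicOrthogonal (moments a b W) A :=
    { coeff_self := haDiag
      coeff_of_lt := fun n k h => haHigh n k (by exact_mod_cast h)
      momentAgainst_of_lt := fun {n k} h => by
        rw [← mint_pow_smul_evalPoly_mul hab.le hW, ← horth n k h, hPA] }
  have hγA : ∀ n, γ n * momentAgainst (moments a b W) (A n) n n = 1 := fun n => by
    rw [← hA.sum_momentAgainst_mul_conjTranspose, ← mint_evalPoly_mul_mul_evalPoly hab.le hW,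
      ← hγ n, hPA]
    simp only [evalPoly_conjTranspose]
  have hQA : ∀ n z, Q n z = κ n * secondKind (moments a b W) (A n) n z := fun n z => by
    simp only [hQ, ← mint_divDiff hab.le hW, hPn, hPA]
  have hκinv : (κ n)⁻¹ * κ n = 1 := nonsing_inv_mul _ ((isUnit_iff_isUnit_det _).mp (hκu n))
  have key := hA.det_transferMatrix (momentNondegenerate_moments hab.le hW hWnt) hγA
    (s := 2 * (Real.pi : ℂ) * Complex.I) (by simp [Real.pi_ne_zero, I_ne_zero]) n hn z
  simpa only [transferMatrix, hPn, hQA, ← mul_assoc, hκinv, hκ, one_mul, hPA] using key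

theorem stmt5
    (N : ℕ) (hN : 1 ≤ N) (a b : ℝ) (hab : a < b)
    (W : ℝ → Matrix (Fin N) (Fin N) ℂ)
    (hWcont : ContinuousOn W (Set.Ioo a b))
    (hWpos : ∀ x ∈ Set.Ioo a b, (W x).PosDef)
    (hWmom : ∀ (n : ℕ) (i j : Fin N),
      IntegrableOn (fun x : ℝ => |x| ^ n * ‖W x i j‖) (Set.Ioo a b))
    (hWnt : ∀ (d : ℕ) (c : Fin (d + 1) → Matrix (Fin N) (Fin N) ℂ), (∃ k, c k ≠ 0) →
      IsUnit (mint a b (fun x =>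
        (∑ k : Fin (d + 1), ((x : ℂ) ^ (k : ℕ)) • c k) * W x * (∑ k : Fin (d + 1), ((x : ℂ) ^ (k : ℕ)) • c k)ᴴ)))
    (aC : ℕ → ℤ → Matrix (Fin N) (Fin N) ℂ)
    (haDiag : ∀ n : ℕ, aC n n = 1)
    (haHigh : ∀ (n : ℕ) (j : ℤ), (n : ℤ) < j → aC n j = 0)
    (haLow : ∀ (n : ℕ) (j : ℤ), j < 0 → aC n j = 0)
    (P : ℕ → ℂ → Matrix (Fin N) (Fin N) ℂ)
    (hP : ∀ (n : ℕ) (z : ℂ), P n z = ∑ j ∈ Finset.range (n + 1), z ^ j • aC n j)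
    (horth : ∀ n j : ℕ, j < n →
      mint a b (fun x => ((x : ℂ) ^ j) • (P n (x : ℂ) * W x)) = 0)
    (γ : ℕ → Matrix (Fin N) (Fin N) ℂ)
    (hγ : ∀ n : ℕ, γ n * mint a b (fun x => P n (x : ℂ) * W x * (P n (x : ℂ))ᴴ) = 1)
    (κ : ℕ → Matrix (Fin N) (Fin N) ℂ)
    (hκu : ∀ n : ℕ, IsUnit (κ n))
    (hκ : ∀ n : ℕ, (κ n)ᴴ * κ n = γ n)
    (Pn : ℕ → ℂ → Matrix (Fin N) (Fin N) ℂ)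
    (hPn : ∀ (n : ℕ) (z : ℂ), Pn n z = κ n * P n z)
    (Q : ℕ → ℂ → Matrix (Fin N) (Fin N) ℂ)
    (hQ : ∀ (n : ℕ) (z : ℂ),
      Q n z = mint a b (fun t => ((t : ℂ) - z)⁻¹ • ((Pn n (t : ℂ) - Pn n z) * W t)))
 :
    ∀ n : ℕ, 1 ≤ n → ∀ z : ℂ,
      (Matrix.fromBlocks
          ((κ n)⁻¹ * Pn n z)
          ((2 * (Real.pi : ℂ) * Complex.I)⁻¹ • ((κ n)⁻¹ * Q n z))
          (-((2 * (Real.pi : ℂ) * Complex.I) • ((κ (n - 1))ᴴ * Pn (n - 1) z)))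
          (-((κ (n - 1))ᴴ * Q (n - 1) z))).det = 1 :=
  stmt5_general N hN a b hab W hWcont hWmom hWnt aC haDiag haHigh P hP horth γ hγ κ hκu hκ Pn hPn Q
    hQ
end
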